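/- Suppose the dynamical system (X,T,μ) satisfies the polynomial concentration inequality with moment q ≥ 2 and constant C_q > 0. Then there exists a constant D_q > 0 such that for every ε > 0, every n ≥ 1, and every t > 0, the observed empirical measure Ẽ_n = (1/n) Σ_{i=0}^{n−1} δ_{y_i} satisfies μ_n ⊗ P^n(κ(Ẽ_n, μ) > t + E_{μ_n ⊗ P^n}[κ(Ẽ_n, μ)]) ≤ (D_q (1 + ε)^q / t^q) · n^{−q/2}. -/

import Mathlib

open MeasureTheory Real

noncomputable section

/-- `K` is separately Lipschitz in each of its `n` variables, with
`L j` a Lipschitz constant for the `j`-th variable. -/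
def SepLip {E : Type*} [PseudoMetricSpace E] {n : ℕ}
    (K : (Fin n → E) → ℝ) (L : Fin n → ℝ) : Prop :=
  ∀ (x : Fin n → E) (j : Fin n) (y : E),
    |K x - K (Function.update x j y)| ≤ L j * dist (x j) y

/-- The Kantorovich distance between two measures:
`κ(ν₁, ν₂) = sup { ∫ g dν₁ - ∫ g dν₂ : g Lipschitz with constant at most 1 }`. -/
def kantorovich {α : Type*} [MeasurableSpace α] [PseudoMetricSpace α]
    (ν₁ ν₂ : Measure α) : ℝ :=
  ⨆ g : {g : α → ℝ // LipschitzWith 1 g}, (∫ x, g.1 x ∂ν₁ - ∫ x, g.1 x ∂ν₂)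

/-- The observed empirical measure `Ẽ_n = (1/n) ∑_{i<n} δ_{y_i}`,
where `y_i = T^i x + ε ξ_i`. -/
def obsEmpirical {d n : ℕ} (T : EuclideanSpace ℝ (Fin d) → EuclideanSpace ℝ (Fin d))
    (ε : ℝ) (p : EuclideanSpace ℝ (Fin d) × (Fin n → EuclideanSpace ℝ (Fin d))) :
    Measure (EuclideanSpace ℝ (Fin d)) :=
  (n : ENNReal)⁻¹ • ∑ i : Fin n, Measure.dirac (T^[(i : ℕ)] p.1 + ε • p.2 i)

/-!
Write `Φ y` for the Kantorovich distance between `μ` and the empirical measure of `y ∈ Eⁿ`; it is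
`1/n`-Lipschitz in each coordinate. For a fixed initial point `x`, `ξ ↦ Φ (Tⁱx + ε ξᵢ)` has
differences bounded by `2ε/n` in each of the independent noise coordinates, so by Hoeffding's lemma
applied one coordinate at a time (McDiarmid) it is sub-Gaussian with variance proxy `4ε²/n`, and its
`q`-th central moment is `O((ε/√n)^q)`. The noise average `v ↦ E_ξ Φ (v + εξ)` is still separately
`1/n`-Lipschitz, so the concentration hypothesis bounds its `q`-th central moment along orbits by
`C_q n^(-q/2)`. Convexity of `|·|^q` adds the two moments, and Markov's inequality gives the tail.
-/

open Function Finset ProbabilityTheory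
open scoped ENNReal NNReal

theorem Real.rpow_add_le_mul_rpow_add_rpow {a b : ℝ} (ha : 0 ≤ a) (hb : 0 ≤ b) {p : ℝ}
    (hp : 1 ≤ p) : (a + b) ^ p ≤ 2 ^ (p - 1) * (a ^ p + b ^ p) := by
  exact_mod_cast NNReal.rpow_add_le_mul_rpow_add_rpow ⟨a, ha⟩ ⟨b, hb⟩ hp

theorem abs_rpow_le_rpow_mul_exp_add_exp (x : ℝ) {q t : ℝ} (hq : 0 < q) (ht : 0 < t) :
    |x| ^ q ≤ (q / t) ^ q * (exp (t * x) + exp (-t * x)) := by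
  have hy : 0 ≤ t * |x| / q := by positivity
  have hexp : (t * |x| / q) ^ q ≤ exp (t * |x|) :=
    calc (t * |x| / q) ^ q ≤ exp (t * |x| / q) ^ q :=
          rpow_le_rpow hy (by linarith [add_one_le_exp (t * |x| / q)]) hq.le
      _ = exp (t * |x|) := by rw [← exp_mul]; field_simp
  have habs : exp (t * |x|) ≤ exp (t * x) + exp (-t * x) := by
    rcases abs_cases x with ⟨hx, -⟩ | ⟨hx, -⟩ <;> rw [hx]
    · linarith [exp_pos (-t * x)]
    · rw [show t * -x = -t * x by ring]
      linarith [exp_pos (t * x)]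
  calc |x| ^ q = (q / t) ^ q * (t * |x| / q) ^ q := by
        rw [← mul_rpow (by positivity) hy]; congr 1; field_simp
    _ ≤ (q / t) ^ q * (exp (t * x) + exp (-t * x)) := by gcongr; exact hexp.trans habs

section Moments

variable {Ω : Type*} [MeasurableSpace Ω] {μ : Measure Ω}

theorem integrable_abs_rpow_of_ae_abs_le [IsFiniteMeasure μ] {f : Ω → ℝ} (hf : Measurable f)
    {C : ℝ} (hC : ∀ᵐ ω ∂μ, |f ω| ≤ C) {q : ℝ} (hq : 0 ≤ q) :
    Integrable (fun ω => |f ω| ^ q) μ := by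
  refine Integrable.of_bound (hf.abs.pow_const q).aestronglyMeasurable (C ^ q) ?_
  filter_upwards [hC] with ω hω
  rw [Real.norm_eq_abs, abs_of_nonneg (by positivity)]
  gcongr

theorem measureReal_add_lt_le_integral_abs_sub_rpow_div [IsFiniteMeasure μ] {f : Ω → ℝ}
    (hf : Measurable f) {C : ℝ} (hC : ∀ᵐ ω ∂μ, |f ω| ≤ C) {m t q : ℝ} (ht : 0 < t) (hq : 0 < q) :
    μ.real {ω | t + m < f ω} ≤ (∫ ω, |f ω - m| ^ q ∂μ) / t ^ q := by
  have hint : Integrable (fun ω => |f ω - m| ^ q) μ :=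
    integrable_abs_rpow_of_ae_abs_le (hf.sub_const m) (C := C + |m|)
      (hC.mono fun ω h => (abs_sub _ _).trans (add_le_add_left h _)) hq.le
  have hsub : {ω | t + m < f ω} ⊆ {ω | t ^ q ≤ |f ω - m| ^ q} := fun ω hω => by
    have hω : t + m < f ω := hω
    exact rpow_le_rpow ht.le (le_abs.2 (Or.inl (by linarith))) hq.le
  rw [le_div_iff₀ (by positivity), mul_comm]
  exact (mul_le_mul_of_nonneg_left (measureReal_mono hsub) (by positivity)).trans
    (mul_meas_ge_le_integral_of_nonneg (ae_of_all _ fun ω => by positivity) hint _)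

theorem ProbabilityTheory.HasSubgaussianMGF.integral_abs_rpow_le {X : Ω → ℝ} {c : ℝ≥0}
    (h : HasSubgaussianMGF X c μ) (hc : 0 < c) {q : ℝ} (hq : 0 < q) :
    ∫ ω, |X ω| ^ q ∂μ ≤ 2 * exp (1 / 2) * q ^ q * (c : ℝ) ^ (q / 2) := by
  set t : ℝ := (√(c : ℝ))⁻¹
  have hc' : (0 : ℝ) < c := hc
  have ht : 0 < t := by positivity
  have hct : (c : ℝ) * t ^ 2 / 2 = 1 / 2 := by
    rw [inv_pow, sq_sqrt hc'.le]; field_simp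
  have hqt : (q / t) ^ q = q ^ q * (c : ℝ) ^ (q / 2) := by
    rw [div_inv_eq_mul, mul_rpow hq.le (sqrt_nonneg _), sqrt_eq_rpow, ← rpow_mul hc'.le]
    ring_nf
  calc ∫ ω, |X ω| ^ q ∂μ ≤ ∫ ω, (q / t) ^ q * (exp (t * X ω) + exp (-t * X ω)) ∂μ :=
        integral_mono_of_nonneg (ae_of_all _ fun ω => by positivity)
          (((h.integrable_exp_mul t).add (h.integrable_exp_mul (-t))).const_mul _)
          (ae_of_all _ fun ω => abs_rpow_le_rpow_mul_exp_add_exp _ hq ht)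
    _ = (q / t) ^ q * (mgf X μ t + mgf X μ (-t)) := by
        rw [integral_const_mul, integral_add (h.integrable_exp_mul t) (h.integrable_exp_mul (-t))]
        rfl
    _ ≤ (q / t) ^ q * (exp (c * t ^ 2 / 2) + exp (c * (-t) ^ 2 / 2)) := by
        gcongr
        · exact h.mgf_le t
        · exact h.mgf_le (-t)
    _ = 2 * exp (1 / 2) * q ^ q * (c : ℝ) ^ (q / 2) := by
        rw [neg_sq, hct, hqt]; ring

end Moments

section ProductMoments

variable {Ω₁ Ω₂ : Type*} [MeasurableSpace Ω₁] [MeasurableSpace Ω₂] {μ : Measure Ω₁}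
  {ν : Measure Ω₂} [IsProbabilityMeasure μ] [IsProbabilityMeasure ν]

theorem integral_abs_sub_integral_rpow_prod_le {F : Ω₁ × Ω₂ → ℝ} (hF : Measurable F) {C : ℝ}
    (hC : ∀ᵐ p ∂μ.prod ν, |F p| ≤ C) {q A B : ℝ} (hq : 1 ≤ q)
    (hA : ∀ᵐ x ∂μ, ∫ y, |F (x, y) - ∫ y', F (x, y') ∂ν| ^ q ∂ν ≤ A)
    (hB : ∫ x, |∫ y, F (x, y) ∂ν - ∫ x', ∫ y, F (x', y) ∂ν ∂μ| ^ q ∂μ ≤ B) :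
    ∫ p, |F p - ∫ p', F p' ∂μ.prod ν| ^ q ∂μ.prod ν ≤ 2 ^ (q - 1) * (A + B) := by
  set K : Ω₁ → ℝ := fun x => ∫ y, F (x, y) ∂ν
  set m : ℝ := ∫ x, K x ∂μ
  have hKm : Measurable K := hF.stronglyMeasurable.integral_prod_right'.measurable
  have hKC : ∀ᵐ x ∂μ, |K x| ≤ C := by
    filter_upwards [Measure.ae_ae_of_ae_prod hC] with x hx
    simpa using norm_integral_le_of_norm_le_const (μ := ν) (f := fun y => F (x, y))
      (by simpa only [Real.norm_eq_abs] using hx)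
  have hKC' : ∀ᵐ p ∂μ.prod ν, |K p.1| ≤ C := Measure.quasiMeasurePreserving_fst.ae hKC
  have hFint : Integrable F (μ.prod ν) :=
    Integrable.of_bound hF.aestronglyMeasurable C (by simpa only [Real.norm_eq_abs] using hC)
  have hmean : ∫ p, F p ∂μ.prod ν = m := integral_prod F hFint
  have hint₁ : Integrable (fun p => |F p - K p.1| ^ q) (μ.prod ν) := by
    refine integrable_abs_rpow_of_ae_abs_le (hF.sub (hKm.comp measurable_fst)) (C := C + C) ?_
      (by linarith)
    filter_upwards [hC, hKC'] with p h₁ h₂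
    exact (abs_sub _ _).trans (add_le_add h₁ h₂)
  have hint₂ : Integrable (fun p => |K p.1 - m| ^ q) (μ.prod ν) := by
    refine integrable_abs_rpow_of_ae_abs_le ((hKm.comp measurable_fst).sub_const m)
      (C := C + |m|) ?_ (by linarith)
    filter_upwards [hKC'] with p h
    exact (abs_sub _ _).trans (add_le_add_left h _)
  have h₁ : ∫ p, |F p - K p.1| ^ q ∂μ.prod ν ≤ A := by
    rw [integral_prod _ hint₁]
    simpa using integral_mono_ae hint₁.integral_prod_left (integrable_const A) hA
  have h₂ : ∫ p, |K p.1 - m| ^ q ∂μ.prod ν ≤ B := by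
    rw [integral_prod _ hint₂]
    simpa using hB
  rw [hmean]
  calc ∫ p, |F p - m| ^ q ∂μ.prod ν
      ≤ ∫ p, 2 ^ (q - 1) * (|F p - K p.1| ^ q + |K p.1 - m| ^ q) ∂μ.prod ν := by
        refine integral_mono_of_nonneg (ae_of_all _ fun p => by positivity)
          ((hint₁.add hint₂).const_mul _) (ae_of_all _ fun p => ?_)
        calc |F p - m| ^ q ≤ (|F p - K p.1| + |K p.1 - m|) ^ q := by
              gcongr; exact abs_sub_le _ _ _
          _ ≤ _ := Real.rpow_add_le_mul_rpow_add_rpow (abs_nonneg _) (abs_nonneg _) hq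
    _ = 2 ^ (q - 1) * (∫ p, |F p - K p.1| ^ q ∂μ.prod ν + ∫ p, |K p.1 - m| ^ q ∂μ.prod ν) := by
        rw [integral_const_mul, integral_add hint₁ hint₂]
    _ ≤ 2 ^ (q - 1) * (A + B) := by gcongr

end ProductMoments

section FinCons

variable {α : Type*} [MeasurableSpace α] {n : ℕ}

theorem MeasurableEquiv.coe_piFinSuccAbove_zero_symm :
    ⇑(MeasurableEquiv.piFinSuccAbove (fun _ => α) 0).symm
      = fun p : α × (Fin n → α) => (Fin.cons p.1 p.2 : Fin (n + 1) → α) := by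
  ext p : 1; simp; rfl

theorem measurableEmbedding_fin_cons_prod :
    MeasurableEmbedding fun p : α × (Fin n → α) => (Fin.cons p.1 p.2 : Fin (n + 1) → α) :=
  MeasurableEquiv.coe_piFinSuccAbove_zero_symm (α := α) ▸
    (MeasurableEquiv.piFinSuccAbove _ 0).symm.measurableEmbedding

theorem integral_pi_fin_succ (P : Measure α) [SigmaFinite P] {f : (Fin (n + 1) → α) → ℝ}
    (hf : Integrable f (Measure.pi fun _ => P)) :
    ∫ ξ, f ξ ∂Measure.pi (fun _ => P)
      = ∫ η, ∫ a, f (Fin.cons a η) ∂P ∂Measure.pi (fun _ => P) := by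
  have e := (measurePreserving_piFinSuccAbove (fun _ : Fin (n + 1) => P) 0).symm
  rw [MeasurableEquiv.coe_piFinSuccAbove_zero_symm] at e
  rw [← e.integral_comp measurableEmbedding_fin_cons_prod]
  exact integral_prod_symm _ ((e.integrable_comp_emb measurableEmbedding_fin_cons_prod).2 hf)

theorem measurable_fin_cons (η : Fin n → α) :
    Measurable fun a : α => (Fin.cons a η : Fin (n + 1) → α) :=
  measurableEmbedding_fin_cons_prod.measurable.comp measurable_prodMk_right

end FinCons

def HasBoundedDifferences {α : Type*} {n : ℕ} (G : (Fin n → α) → ℝ) (b : ℝ) : Prop :=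
  ∀ x j w, |G x - G (update x j w)| ≤ b

namespace HasBoundedDifferences

variable {α : Type*} {n : ℕ} {b : ℝ}

theorem comp_cons {G : (Fin (n + 1) → α) → ℝ} (hG : HasBoundedDifferences G b) (a : α) :
    HasBoundedDifferences (fun η => G (Fin.cons a η)) b := fun η j w => by
  simpa [Fin.cons_update] using hG (Fin.cons a η) j.succ w

theorem abs_sub_cons_le {G : (Fin (n + 1) → α) → ℝ} (hG : HasBoundedDifferences G b)
    (a a' : α) (η : Fin n → α) : |G (Fin.cons a η) - G (Fin.cons a' η)| ≤ b := by
  simpa using hG (Fin.cons a η) 0 a'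

theorem abs_sub_le_mul {G : (Fin n → α) → ℝ} (hG : HasBoundedDifferences G b) (x y : Fin n → α) :
    |G x - G y| ≤ n * b := by
  induction n with
  | zero => simp [Subsingleton.elim x y]
  | succ n ih =>
    rw [← Fin.cons_self_tail x, ← Fin.cons_self_tail y]
    have h₁ := hG.abs_sub_cons_le (x 0) (y 0) (Fin.tail x)
    have h₂ := ih (hG.comp_cons (y 0)) (Fin.tail x) (Fin.tail y)
    push_cast
    linarith [abs_sub_le (G (Fin.cons (x 0) (Fin.tail x)))
      (G (Fin.cons (y 0) (Fin.tail x))) (G (Fin.cons (y 0) (Fin.tail y)))]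

theorem exists_abs_le {G : (Fin n → α) → ℝ} (hG : HasBoundedDifferences G b) :
    ∃ C, ∀ x, |G x| ≤ C := by
  rcases isEmpty_or_nonempty (Fin n → α) with h | ⟨⟨x₀⟩⟩
  · exact ⟨0, fun x => isEmptyElim x⟩
  · exact ⟨|G x₀| + n * b, fun x => by
      linarith [hG.abs_sub_le_mul x x₀, abs_sub_abs_le_abs_sub (G x) (G x₀)]⟩

variable [MeasurableSpace α]

theorem integrable {G : (Fin n → α) → ℝ} (hG : HasBoundedDifferences G b) (hGm : Measurable G)
    (μ : Measure (Fin n → α)) [IsFiniteMeasure μ] : Integrable G μ := by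
  obtain ⟨C, hC⟩ := hG.exists_abs_le
  exact Integrable.of_bound hGm.aestronglyMeasurable C (ae_of_all _ hC)

theorem integrable_exp_mul_sub {G : (Fin n → α) → ℝ} (hG : HasBoundedDifferences G b)
    (hGm : Measurable G) (μ : Measure (Fin n → α)) [IsFiniteMeasure μ] (t c : ℝ) :
    Integrable (fun x => exp (t * (G x - c))) μ := by
  obtain ⟨C, hC⟩ := hG.exists_abs_le
  refine integrable_exp_mul_of_mem_Icc (a := -C - c) (b := C - c)
    (hGm.sub_const c).aemeasurable (ae_of_all _ fun x => ?_)
  have := abs_le.1 (hC x)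
  constructor <;> linarith

variable {P : Measure α} [IsProbabilityMeasure P]

theorem integral_comp_cons {G : (Fin (n + 1) → α) → ℝ} (hG : HasBoundedDifferences G b)
    (hGm : Measurable G) :
    HasBoundedDifferences (fun η => ∫ a, G (Fin.cons a η) ∂P) b := by
  obtain ⟨C, hC⟩ := hG.exists_abs_le
  have hint : ∀ η, Integrable (fun a => G (Fin.cons a η)) P := fun η =>
    Integrable.of_bound (hGm.comp (measurable_fin_cons η)).aestronglyMeasurable C
      (ae_of_all _ fun a => hC _)
  intro η j w
  rw [← integral_sub (hint η) (hint _)]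
  simpa using norm_integral_le_of_norm_le_const (μ := P)
    (f := fun a => G (Fin.cons a η) - G (Fin.cons a (update η j w)))
    (ae_of_all _ fun a => (hG.comp_cons a) η j w)

theorem mgf_comp_cons_sub_integral_le {G : (Fin (n + 1) → α) → ℝ}
    (hG : HasBoundedDifferences G b) (hGm : Measurable G) (η : Fin n → α) (t : ℝ) :
    mgf (fun a => G (Fin.cons a η) - ∫ a', G (Fin.cons a' η) ∂P) P t
      ≤ exp (b ^ 2 * t ^ 2 / 2) := by
  obtain ⟨a₀⟩ := nonempty_of_isProbabilityMeasure P
  have hmem : ∀ a, G (Fin.cons a η) ∈ Set.Icc (G (Fin.cons a₀ η) - b) (G (Fin.cons a₀ η) + b) :=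
    fun a => by
      have := abs_le.1 (hG.abs_sub_cons_le a a₀ η)
      constructor <;> linarith
  convert (hasSubgaussianMGF_of_mem_Icc (μ := P) (hGm.comp (measurable_fin_cons η)).aemeasurable
    (ae_of_all _ hmem)).mgf_le t using 3
  · rfl
  · rw [show G (Fin.cons a₀ η) + b - (G (Fin.cons a₀ η) - b) = 2 * b by ring]
    push_cast
    rw [Real.norm_eq_abs, div_pow, sq_abs]
    ring

theorem mgf_sub_integral_le {G : (Fin n → α) → ℝ} (hG : HasBoundedDifferences G b)
    (hGm : Measurable G) (t : ℝ) :
    mgf (fun x => G x - ∫ y, G y ∂Measure.pi fun _ => P) (Measure.pi fun _ => P) t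
      ≤ exp (n * b ^ 2 * t ^ 2 / 2) := by
  induction n with
  | zero =>
    have hconst : G = fun _ => G Fin.elim0 := funext fun x => congrArg G (Subsingleton.elim _ _)
    rw [hconst]
    simp [mgf]
  | succ n ih =>
    set g : (Fin n → α) → ℝ := fun η => ∫ a, G (Fin.cons a η) ∂P
    have hgm : Measurable g :=
      (hGm.comp measurableEmbedding_fin_cons_prod.measurable).stronglyMeasurable
        |>.integral_prod_left'.measurable
    have hg : HasBoundedDifferences g b := hG.integral_comp_cons hGm
    have hEG : ∫ ξ, G ξ ∂Measure.pi (fun _ => P) = ∫ η, g η ∂Measure.pi (fun _ => P) :=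
      integral_pi_fin_succ P (hG.integrable hGm _)
    calc mgf (fun x => G x - ∫ y, G y ∂Measure.pi fun _ => P) (Measure.pi fun _ => P) t
        = ∫ η, exp (t * (g η - ∫ η', g η' ∂Measure.pi fun _ => P))
            * mgf (fun a => G (Fin.cons a η) - g η) P t ∂Measure.pi fun _ => P := by
          rw [mgf, integral_pi_fin_succ P (hG.integrable_exp_mul_sub hGm _ t _), hEG]
          refine integral_congr_ae (ae_of_all _ fun η => ?_)
          simp only [mgf]
          rw [← integral_const_mul]
          refine integral_congr_ae (ae_of_all _ fun a => ?_)
          simp only [← exp_add]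
          ring_nf
      _ ≤ ∫ η, exp (t * (g η - ∫ η', g η' ∂Measure.pi fun _ => P)) * exp (b ^ 2 * t ^ 2 / 2)
            ∂Measure.pi fun _ => P :=
          integral_mono_of_nonneg (ae_of_all _ fun η => mul_nonneg (exp_pos _).le mgf_nonneg)
            ((hg.integrable_exp_mul_sub hgm _ t _).mul_const _) (ae_of_all _ fun η =>
              mul_le_mul_of_nonneg_left (hG.mgf_comp_cons_sub_integral_le hGm η t) (exp_pos _).le)
      _ = mgf (fun η => g η - ∫ η', g η' ∂Measure.pi fun _ => P) (Measure.pi fun _ => P) t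
            * exp (b ^ 2 * t ^ 2 / 2) := by
          rw [integral_mul_const, mgf]
      _ ≤ exp (n * b ^ 2 * t ^ 2 / 2) * exp (b ^ 2 * t ^ 2 / 2) :=
          mul_le_mul_of_nonneg_right (ih hg hgm) (exp_pos _).le
      _ = exp ((n + 1 : ℕ) * b ^ 2 * t ^ 2 / 2) := by
          rw [← exp_add]; push_cast; ring_nf

theorem hasSubgaussianMGF {G : (Fin n → α) → ℝ} (hG : HasBoundedDifferences G b)
    (hGm : Measurable G) :
    HasSubgaussianMGF (fun x => G x - ∫ y, G y ∂Measure.pi fun _ => P) (n * b ^ 2).toNNReal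
      (Measure.pi fun _ => P) where
  integrable_exp_mul t := hG.integrable_exp_mul_sub hGm _ t _
  mgf_le t := by
    rw [Real.coe_toNNReal _ (by positivity)]
    exact hG.mgf_sub_integral_le hGm t

end HasBoundedDifferences

def empiricalMeasure {α : Type*} [MeasurableSpace α] {n : ℕ} (y : Fin n → α) : Measure α :=
  (n : ℝ≥0∞)⁻¹ • ∑ i, Measure.dirac (y i)

section Kantorovich

variable {α : Type*} [PseudoMetricSpace α] [MeasurableSpace α] [OpensMeasurableSpace α]
  {n : ℕ} {μ : Measure α} [IsProbabilityMeasure μ] {z₀ : α} {R : ℝ}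

instance : Nonempty {g : α → ℝ // LipschitzWith 1 g} :=
  ⟨⟨0, (LipschitzWith.const 0).weaken zero_le_one⟩⟩

theorem integral_empiricalMeasure {f : α → ℝ} (hf : Continuous f) (y : Fin n → α) :
    ∫ z, f z ∂empiricalMeasure y = (n : ℝ)⁻¹ * ∑ i, f (y i) := by
  have hint : ∀ i ∈ univ, Integrable f (Measure.dirac (y i)) := fun i _ =>
    ⟨hf.aestronglyMeasurable, by simp [HasFiniteIntegral, lintegral_dirac' _ hf.measurable.enorm]⟩
  rw [empiricalMeasure, integral_smul_measure, integral_finsetSum_measure hint]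
  simp [integral_dirac' _ _ hf.stronglyMeasurable]

theorem LipschitzWith.sub_le_integral {g : α → ℝ} (hg : LipschitzWith 1 g)
    (hμ : ∀ᵐ z ∂μ, dist z z₀ ≤ R) : g z₀ - R ≤ ∫ z, g z ∂μ := by
  have hlow : ∀ᵐ z ∂μ, g z₀ - R ≤ g z := by
    filter_upwards [hμ] with z hz
    have := (abs_sub_le_iff.1 (by simpa [Real.dist_eq] using hg.dist_le_mul z z₀)).2
    linarith
  have hint : Integrable g μ := by
    refine Integrable.of_bound hg.continuous.aestronglyMeasurable (|g z₀| + R) ?_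
    filter_upwards [hμ] with z hz
    have := hg.dist_le_mul z z₀
    simp only [NNReal.coe_one, one_mul, Real.dist_eq] at this
    rw [Real.norm_eq_abs]
    linarith [abs_sub_abs_le_abs_sub (g z) (g z₀)]
  simpa using integral_mono_ae (integrable_const _) hint hlow

theorem LipschitzWith.integral_empiricalMeasure_sub_le {g : α → ℝ} (hg : LipschitzWith 1 g)
    (y y' : Fin n → α) :
    ∫ z, g z ∂empiricalMeasure y - ∫ z, g z ∂empiricalMeasure y'
      ≤ (n : ℝ)⁻¹ * ∑ i, dist (y i) (y' i) := by
  rw [integral_empiricalMeasure hg.continuous, integral_empiricalMeasure hg.continuous, ← mul_sub,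
    ← sum_sub_distrib]
  gcongr with i
  exact (le_abs_self _).trans (by simpa [Real.dist_eq] using hg.dist_le_mul (y i) (y' i))

theorem LipschitzWith.integral_empiricalMeasure_sub_integral_le {g : α → ℝ}
    (hg : LipschitzWith 1 g) (hn : n ≠ 0) (hμ : ∀ᵐ z ∂μ, dist z z₀ ≤ R) {y : Fin n → α} {r : ℝ}
    (hy : ∀ i, dist (y i) z₀ ≤ r) :
    ∫ z, g z ∂empiricalMeasure y - ∫ z, g z ∂μ ≤ r + R := by
  have hconst : ∫ z, g z ∂empiricalMeasure (fun _ : Fin n => z₀) = g z₀ := by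
    rw [integral_empiricalMeasure hg.continuous]
    simp [hn]
  have hsum : (n : ℝ)⁻¹ * ∑ i, dist (y i) z₀ ≤ r := by
    calc (n : ℝ)⁻¹ * ∑ i, dist (y i) z₀ ≤ (n : ℝ)⁻¹ * ∑ _i : Fin n, r := by gcongr; exact hy _
      _ = r := by simp [hn]
  linarith [hg.integral_empiricalMeasure_sub_le y (fun _ => z₀), hg.sub_le_integral hμ]

theorem bddAbove_kantorovich_empiricalMeasure (hn : n ≠ 0) (hμ : ∀ᵐ z ∂μ, dist z z₀ ≤ R)
    (y : Fin n → α) :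
    BddAbove (Set.range fun g : {g : α → ℝ // LipschitzWith 1 g} =>
      ∫ z, g.1 z ∂empiricalMeasure y - ∫ z, g.1 z ∂μ) := by
  refine ⟨(∑ i, dist (y i) z₀) + R, ?_⟩
  rintro _ ⟨g, rfl⟩
  exact g.2.integral_empiricalMeasure_sub_integral_le hn hμ fun i =>
    single_le_sum (fun j _ => dist_nonneg) (mem_univ i)

theorem kantorovich_empiricalMeasure_nonneg (hn : n ≠ 0) (hμ : ∀ᵐ z ∂μ, dist z z₀ ≤ R)
    (y : Fin n → α) : 0 ≤ kantorovich (empiricalMeasure y) μ := by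
  simpa [kantorovich] using le_ciSup (bddAbove_kantorovich_empiricalMeasure hn hμ y)
    ⟨0, (LipschitzWith.const 0).weaken zero_le_one⟩

theorem kantorovich_empiricalMeasure_le (hn : n ≠ 0) (hμ : ∀ᵐ z ∂μ, dist z z₀ ≤ R)
    {y : Fin n → α} {r : ℝ} (hy : ∀ i, dist (y i) z₀ ≤ r) :
    kantorovich (empiricalMeasure y) μ ≤ r + R :=
  ciSup_le fun g => g.2.integral_empiricalMeasure_sub_integral_le hn hμ hy

theorem kantorovich_empiricalMeasure_le_add (hn : n ≠ 0) (hμ : ∀ᵐ z ∂μ, dist z z₀ ≤ R)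
    (y y' : Fin n → α) :
    kantorovich (empiricalMeasure y) μ
      ≤ kantorovich (empiricalMeasure y') μ + (n : ℝ)⁻¹ * ∑ i, dist (y i) (y' i) := by
  refine ciSup_le fun g => ?_
  have : _ ≤ kantorovich (empiricalMeasure y') μ :=
    le_ciSup (bddAbove_kantorovich_empiricalMeasure hn hμ y') g
  linarith [g.2.integral_empiricalMeasure_sub_le y y']

theorem lipschitzWith_kantorovich_empiricalMeasure (hn : n ≠ 0)
    (hμ : ∀ᵐ z ∂μ, dist z z₀ ≤ R) :
    LipschitzWith 1 fun y : Fin n → α => kantorovich (empiricalMeasure y) μ := by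
  have hmean : ∀ y y' : Fin n → α, (n : ℝ)⁻¹ * ∑ i, dist (y i) (y' i) ≤ dist y y' := fun y y' =>
    calc (n : ℝ)⁻¹ * ∑ i, dist (y i) (y' i) ≤ (n : ℝ)⁻¹ * ∑ _i : Fin n, dist y y' := by
          gcongr; exact dist_le_pi_dist y y' _
      _ = dist y y' := by simp [hn]
  refine LipschitzWith.of_dist_le_mul fun y y' => ?_
  rw [NNReal.coe_one, one_mul, Real.dist_eq, abs_sub_le_iff]
  constructor <;> linarith [kantorovich_empiricalMeasure_le_add hn hμ y y', hmean y y',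
    kantorovich_empiricalMeasure_le_add hn hμ y' y, hmean y' y, dist_comm y y']

theorem sepLip_kantorovich_empiricalMeasure (hn : n ≠ 0) (hμ : ∀ᵐ z ∂μ, dist z z₀ ≤ R) :
    SepLip (fun y : Fin n → α => kantorovich (empiricalMeasure y) μ) fun _ => (n : ℝ)⁻¹ := by
  intro y j w
  have hsum : ∑ i, dist (y i) (update y j w i) = dist (y j) w := by
    rw [sum_eq_single j (fun i _ hi => by simp [hi]) (by simp), update_self]
  have h₁ := kantorovich_empiricalMeasure_le_add hn hμ y (update y j w)
  have h₂ := kantorovich_empiricalMeasure_le_add hn hμ (update y j w) y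
  simp_rw [dist_comm (update y j w _)] at h₂
  rw [hsum] at h₁ h₂
  exact abs_sub_le_iff.2 ⟨by linarith, by linarith⟩

end Kantorovich

theorem ae_pi_forall_of_ae {ι α : Type*} [Fintype ι] [MeasurableSpace α] {P : Measure α}
    [SigmaFinite P] {p : α → Prop} (h : ∀ᵐ a ∂P, p a) :
    ∀ᵐ ξ ∂Measure.pi (fun _ : ι => P), ∀ i, p (ξ i) :=
  ae_all_iff.2 fun _ => Measure.tendsto_eval_ae_ae.eventually h

namespace SepLip

variable {n : ℕ}

theorem integral {E Ω : Type*} [PseudoMetricSpace E] [MeasurableSpace Ω] {ν : Measure Ω}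
    [IsProbabilityMeasure ν] {K : (Fin n → E) → Ω → ℝ} {L : Fin n → ℝ} (hK : ∀ ω, SepLip (fun v => K v ω) L)
    (hint : ∀ v, Integrable (K v) ν) :
    SepLip (fun v => ∫ ω, K v ω ∂ν) L := by
  intro v j w
  rw [← integral_sub (hint v) (hint _)]
  simpa using norm_integral_le_of_norm_le_const (μ := ν)
    (f := fun ω => K v ω - K (update v j w) ω) (ae_of_all _ fun ω => hK ω v j w)

theorem comp_add_right {E : Type*} [SeminormedAddCommGroup E] {K : (Fin n → E) → ℝ}
    {L : Fin n → ℝ} (hK : SepLip K L) (u : Fin n → E) :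
    SepLip (fun v => K fun i => v i + u i) L := by
  intro v j w
  have hupd : (fun i => update v j w i + u i) = update (fun i => v i + u i) j (w + u j) :=
    funext fun i => apply_update (fun k a => a + u k) v j w i
  simpa only [hupd, dist_add_right] using hK (fun i => v i + u i) j (w + u j)

theorem hasBoundedDifferences_comp {E α : Type*} [PseudoMetricSpace E] {K : (Fin n → E) → ℝ}
    {c D : ℝ} (hK : SepLip K fun _ => c)
    (hc : 0 ≤ c) {f : Fin n → α → E} (hf : ∀ i a a', dist (f i a) (f i a') ≤ D) :
    HasBoundedDifferences (fun ξ => K fun i => f i (ξ i)) (c * D) := by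
  intro ξ j w
  have hupd : (fun i => f i (update ξ j w i)) = update (fun i => f i (ξ i)) j (f j w) :=
    funext fun i => apply_update f ξ j w i
  simpa only [hupd] using (hK _ j _).trans (mul_le_mul_of_nonneg_left (hf j _ _) hc)

end SepLip

section ObservationNoise

variable {E : Type*} [NormedAddCommGroup E] [NormedSpace ℝ E] [MeasurableSpace E] [BorelSpace E]
  [SecondCountableTopology E] {n : ℕ} {μ : Measure E} [IsProbabilityMeasure μ] {z₀ : E} {R : ℝ}
  {P : Measure E} [IsProbabilityMeasure P]

theorem integrable_kantorovich_add_smul (hn : n ≠ 0) (hμ : ∀ᵐ z ∂μ, dist z z₀ ≤ R)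
    (hP : ∀ᵐ ξ ∂P, ‖ξ‖ ≤ 1) (ε : ℝ) (v : Fin n → E) :
    Integrable (fun ξ => kantorovich (empiricalMeasure fun i => v i + ε • ξ i) μ)
      (Measure.pi fun _ => P) := by
  have hΦ := lipschitzWith_kantorovich_empiricalMeasure hn hμ
  refine Integrable.of_bound (hΦ.continuous.comp (by fun_prop)).aestronglyMeasurable
    (|kantorovich (empiricalMeasure v) μ| + |ε|) ?_
  filter_upwards [ae_pi_forall_of_ae hP] with ξ hξ
  have hdist : dist (fun i => v i + ε • ξ i) v ≤ |ε| := by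
    refine (dist_pi_le_iff (abs_nonneg ε)).2 fun i => ?_
    rw [dist_self_add_left, norm_smul, Real.norm_eq_abs]
    exact mul_le_of_le_one_right (abs_nonneg ε) (hξ i)
  have := hΦ.dist_le_mul (fun i => v i + ε • ξ i) v
  rw [NNReal.coe_one, one_mul, Real.dist_eq] at this
  rw [Real.norm_eq_abs]
  linarith [abs_sub_abs_le_abs_sub (kantorovich (empiricalMeasure fun i => v i + ε • ξ i) μ)
    (kantorovich (empiricalMeasure v) μ)]

theorem sepLip_integral_kantorovich_add_smul (hn : n ≠ 0) (hμ : ∀ᵐ z ∂μ, dist z z₀ ≤ R)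
    (hP : ∀ᵐ ξ ∂P, ‖ξ‖ ≤ 1) (ε : ℝ) :
    SepLip (fun v : Fin n → E => ∫ ξ, kantorovich (empiricalMeasure fun i => v i + ε • ξ i) μ
      ∂(Measure.pi fun _ => P)) fun _ => (n : ℝ)⁻¹ :=
  SepLip.integral
    (fun ξ => (sepLip_kantorovich_empiricalMeasure hn hμ).comp_add_right fun i => ε • ξ i)
    (integrable_kantorovich_add_smul hn hμ hP ε)

theorem integral_abs_kantorovich_add_smul_sub_rpow_le (hn : n ≠ 0)
    (hμ : ∀ᵐ z ∂μ, dist z z₀ ≤ R) (hP : ∀ᵐ ξ ∂P, ‖ξ‖ ≤ 1) {ε q : ℝ} (hε : 0 < ε) (hq : 0 < q)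
    (v : Fin n → E) :
    ∫ ξ, |kantorovich (empiricalMeasure fun i => v i + ε • ξ i) μ
        - ∫ ξ', kantorovich (empiricalMeasure fun i => v i + ε • ξ' i) μ ∂(Measure.pi fun _ => P)|
        ^ q ∂(Measure.pi fun _ => P)
      ≤ 2 * exp (1 / 2) * q ^ q * (2 * ε) ^ q * (n : ℝ) ^ (-(q / 2)) := by
  -- `r` fixes the unit ball, which carries `P`, and makes the differences bounded everywhere.
  let r : E → E := fun z => if ‖z‖ ≤ 1 then z else 0
  have hrm : Measurable r :=
    Measurable.ite (measurableSet_le measurable_norm measurable_const) measurable_id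
      measurable_const
  have hr : ∀ z, ‖r z‖ ≤ 1 := fun z => by by_cases h : ‖z‖ ≤ 1 <;> simp [r, h]
  let G : (Fin n → E) → ℝ := fun ξ => kantorovich (empiricalMeasure fun i => v i + ε • r (ξ i)) μ
  have hGm : Measurable G :=
    (lipschitzWith_kantorovich_empiricalMeasure hn hμ).continuous.measurable.comp
      (measurable_pi_lambda _ fun i => measurable_const.add
        ((hrm.comp (measurable_pi_apply i)).const_smul ε))
  have hG : HasBoundedDifferences G ((n : ℝ)⁻¹ * (2 * ε)) :=
    (sepLip_kantorovich_empiricalMeasure hn hμ).hasBoundedDifferences_comp (by positivity)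
      (f := fun i a => v i + ε • r a) fun i a a' => by
        rw [dist_add_left, dist_smul₀, Real.norm_eq_abs, abs_of_pos hε, dist_eq_norm,
          mul_comm 2 ε]
        gcongr
        linarith [norm_sub_le (r a) (r a'), hr a, hr a']
  have hGae : (fun ξ => kantorovich (empiricalMeasure fun i => v i + ε • ξ i) μ)
      =ᵐ[Measure.pi fun _ => P] G := by
    filter_upwards [ae_pi_forall_of_ae hP] with ξ hξ
    simp [G, r, hξ]
  have hn' : (0 : ℝ) < n := by positivity
  have hc : (n : ℝ) * ((n : ℝ)⁻¹ * (2 * ε)) ^ 2 = (2 * ε) ^ 2 * (n : ℝ)⁻¹ := by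
    field_simp
  calc _ = ∫ ξ, |G ξ - ∫ ξ', G ξ' ∂(Measure.pi fun _ => P)| ^ q ∂(Measure.pi fun _ => P) := by
        rw [integral_congr_ae hGae]
        exact integral_congr_ae (hGae.mono fun ξ h => by simp only [h])
    _ ≤ 2 * exp (1 / 2) * q ^ q * ((n * ((n : ℝ)⁻¹ * (2 * ε)) ^ 2).toNNReal : ℝ) ^ (q / 2) :=
        (hG.hasSubgaussianMGF hGm).integral_abs_rpow_le (Real.toNNReal_pos.2 (by positivity)) hq
    _ = 2 * exp (1 / 2) * q ^ q * (2 * ε) ^ q * (n : ℝ) ^ (-(q / 2)) := by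
        rw [Real.coe_toNNReal _ (by positivity), hc, mul_rpow (by positivity) (by positivity),
          ← rpow_natCast, ← rpow_mul (by positivity), inv_rpow hn'.le, ← rpow_neg hn'.le]
        ring_nf

end ObservationNoise

theorem sum_inv_sq_rpow_half {n : ℕ} (hn : n ≠ 0) (q : ℝ) :
    (∑ _j : Fin n, ((n : ℝ)⁻¹) ^ 2) ^ (q / 2) = (n : ℝ) ^ (-(q / 2)) := by
  have hn' : (0 : ℝ) < n := by positivity
  rw [sum_const, card_univ, Fintype.card_fin, nsmul_eq_mul,
    show (n : ℝ) * (n : ℝ)⁻¹ ^ 2 = (n : ℝ)⁻¹ by field_simp, inv_rpow hn'.le, rpow_neg hn'.le]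

section ObservedEmpiricalMeasure

variable {d n : ℕ} {T : EuclideanSpace ℝ (Fin d) → EuclideanSpace ℝ (Fin d)}
  {μ : Measure (EuclideanSpace ℝ (Fin d))} [IsProbabilityMeasure μ]
  {P : Measure (EuclideanSpace ℝ (Fin d))} [IsProbabilityMeasure P] {R : ℝ}

theorem measurable_kantorovich_obsEmpirical (hT : Measurable T) (hn : n ≠ 0)
    (hμ : ∀ᵐ z ∂μ, dist z 0 ≤ R) (ε : ℝ) :
    Measurable fun p : EuclideanSpace ℝ (Fin d) × (Fin n → EuclideanSpace ℝ (Fin d)) =>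
      kantorovich (obsEmpirical T ε p) μ :=
  (lipschitzWith_kantorovich_empiricalMeasure hn hμ).continuous.measurable.comp
    (measurable_pi_lambda _ fun i => ((hT.iterate i).comp measurable_fst).add
      (((measurable_pi_apply i).comp measurable_snd).const_smul ε))

theorem ae_abs_kantorovich_obsEmpirical_le {X : Set (EuclideanSpace ℝ (Fin d))} (hn : n ≠ 0)
    (hX : ∀ᵐ x ∂μ, x ∈ X) (hXR : X ⊆ Metric.closedBall 0 R) (hTX : Set.MapsTo T X X)
    (hP : ∀ᵐ ξ ∂P, ‖ξ‖ ≤ 1) {ε : ℝ} (hε : 0 ≤ ε) :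
    ∀ᵐ p ∂μ.prod (Measure.pi fun _ : Fin n => P),
      |kantorovich (obsEmpirical T ε p) μ| ≤ R + ε + R := by
  have hμ : ∀ᵐ z ∂μ, dist z 0 ≤ R := hX.mono fun z hz => hXR hz
  filter_upwards [Measure.quasiMeasurePreserving_fst.ae hX,
    Measure.quasiMeasurePreserving_snd.ae (ae_pi_forall_of_ae hP)] with p hx hξ
  show |kantorovich (empiricalMeasure fun i => T^[i] p.1 + ε • p.2 i) μ| ≤ _
  rw [abs_of_nonneg (kantorovich_empiricalMeasure_nonneg hn hμ _)]
  refine kantorovich_empiricalMeasure_le hn hμ fun i => ?_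
  have hTi : ‖T^[i] p.1‖ ≤ R := by simpa using hXR (hTX.iterate i hx)
  rw [dist_zero_right]
  refine (norm_add_le _ _).trans (add_le_add hTi ?_)
  rw [norm_smul, Real.norm_eq_abs, abs_of_nonneg hε]
  exact mul_le_of_le_one_right hε (hξ i)

end ObservedEmpiricalMeasure

theorem observed_empirical_measure_polynomial_general {d : ℕ}
    (X : Set (EuclideanSpace ℝ (Fin d))) (hX : IsCompact X)
    (T : EuclideanSpace ℝ (Fin d) → EuclideanSpace ℝ (Fin d))
    (hT : Measurable T) (hTX : Set.MapsTo T X X)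
    (μ : Measure (EuclideanSpace ℝ (Fin d))) [IsProbabilityMeasure μ]
    (hμX : μ X = 1)
    (q : ℝ) (hq : 2 ≤ q) (Cq : ℝ) (hCq : 0 < Cq)
    (hconc : ∀ (n : ℕ), 1 ≤ n → ∀ (K : (Fin n → EuclideanSpace ℝ (Fin d)) → ℝ)
      (L : Fin n → ℝ), SepLip K L →
      ∫ x, |K (fun i => T^[(i : ℕ)] x)
          - ∫ z, K (fun i => T^[(i : ℕ)] z) ∂μ| ^ q ∂μ
        ≤ Cq * (∑ j, L j ^ 2) ^ (q / 2))
    (P : Measure (EuclideanSpace ℝ (Fin d))) [IsProbabilityMeasure P]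
    (hP : ∀ᵐ ξ ∂P, ‖ξ‖ ≤ 1) :
    ∃ Dq : ℝ, 0 < Dq ∧ ∀ ε : ℝ, 0 < ε → ∀ (n : ℕ), 1 ≤ n → ∀ t : ℝ, 0 < t →
      ((μ.prod (Measure.pi fun _ : Fin n => P))
          {p | t + (∫ p', kantorovich (obsEmpirical T ε p') μ
                ∂(μ.prod (Measure.pi fun _ : Fin n => P)))
            < kantorovich (obsEmpirical T ε p) μ}).toReal
        ≤ (Dq * (1 + ε) ^ q / t ^ q) * ((n : ℝ) ^ (-(q / 2))) := by
  obtain ⟨R, hXR⟩ := hX.isBounded.subset_closedBall 0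
  have hX_ae : ∀ᵐ x ∂μ, x ∈ X :=
    (ae_mem_iff_measure_eq hX.measurableSet.nullMeasurableSet).2 (by simp [hμX])
  have hμR : ∀ᵐ z ∂μ, dist z 0 ≤ R := hX_ae.mono fun z hz => hXR hz
  have hq0 : 0 < q := by linarith
  set a : ℝ := 2 * exp (1 / 2) * q ^ q * 2 ^ q
  refine ⟨2 ^ (q - 1) * (a + Cq), by positivity, fun ε hε n hn t ht => ?_⟩
  have hn0 : n ≠ 0 := by omega
  have hFm := measurable_kantorovich_obsEmpirical hT hn0 hμR ε
  have hFC := ae_abs_kantorovich_obsEmpirical_le hn0 hX_ae hXR hTX hP hε.le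
  have hnoise := fun x => integral_abs_kantorovich_add_smul_sub_rpow_le hn0 hμR hP hε hq0
    fun i : Fin n => T^[i] x
  have hdyn := (hconc n hn _ _ (sepLip_integral_kantorovich_add_smul hn0 hμR hP ε)).trans_eq
    (congrArg (Cq * ·) (sum_inv_sq_rpow_half hn0 q))
  have hmoment := integral_abs_sub_integral_rpow_prod_le hFm hFC (by linarith)
    (ae_of_all _ hnoise) hdyn
  have hε' : ε ^ q ≤ (1 + ε) ^ q := rpow_le_rpow hε.le (by linarith) hq0.le
  have h1ε : 1 ≤ (1 + ε) ^ q := one_le_rpow (by linarith) hq0.le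
  calc _ ≤ (∫ p, |kantorovich (obsEmpirical T ε p) μ - _| ^ q ∂_) / t ^ q :=
        measureReal_add_lt_le_integral_abs_sub_rpow_div hFm hFC ht hq0
    _ ≤ 2 ^ (q - 1) * ((a * ε ^ q + Cq) * (n : ℝ) ^ (-(q / 2))) / t ^ q := by
        rw [mul_rpow (by norm_num) hε.le] at hmoment
        gcongr
        linarith
    _ ≤ 2 ^ (q - 1) * ((a + Cq) * (1 + ε) ^ q * (n : ℝ) ^ (-(q / 2))) / t ^ q := by
        gcongr
        nlinarith [mul_le_mul_of_nonneg_left hε' (by positivity : 0 ≤ a),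
          mul_le_mul_of_nonneg_left h1ε hCq.le]
    _ = _ := by ring

/-- Fluctuation bound for the Kantorovich distance between the observed empirical
measure and `μ`, for a system satisfying the polynomial concentration inequality
with moment `q ≥ 2`. -/
theorem observed_empirical_measure_polynomial {d : ℕ}
    (X : Set (EuclideanSpace ℝ (Fin d))) (hX : IsCompact X)
    (T : EuclideanSpace ℝ (Fin d) → EuclideanSpace ℝ (Fin d))
    (hT : Measurable T) (hTX : Set.MapsTo T X X)
    (μ : Measure (EuclideanSpace ℝ (Fin d))) [IsProbabilityMeasure μ]
    (hμX : μ X = 1) (hinv : μ.map T = μ)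
    (q : ℝ) (hq : 2 ≤ q) (Cq : ℝ) (hCq : 0 < Cq)
    (hconc : ∀ (n : ℕ), 1 ≤ n → ∀ (K : (Fin n → EuclideanSpace ℝ (Fin d)) → ℝ)
      (L : Fin n → ℝ), SepLip K L →
      ∫ x, |K (fun i => T^[(i : ℕ)] x)
          - ∫ z, K (fun i => T^[(i : ℕ)] z) ∂μ| ^ q ∂μ
        ≤ Cq * (∑ j, L j ^ 2) ^ (q / 2))
    (P : Measure (EuclideanSpace ℝ (Fin d))) [IsProbabilityMeasure P]
    (hP : ∀ᵐ ξ ∂P, ‖ξ‖ ≤ 1) :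
    ∃ Dq : ℝ, 0 < Dq ∧ ∀ ε : ℝ, 0 < ε → ∀ (n : ℕ), 1 ≤ n → ∀ t : ℝ, 0 < t →
      ((μ.prod (Measure.pi fun _ : Fin n => P))
          {p | t + (∫ p', kantorovich (obsEmpirical T ε p') μ
                ∂(μ.prod (Measure.pi fun _ : Fin n => P)))
            < kantorovich (obsEmpirical T ε p) μ}).toReal
        ≤ (Dq * (1 + ε) ^ q / t ^ q) * ((n : ℝ) ^ (-(q / 2))) :=
  observed_empirical_measure_polynomial_general X hX T hT hTX μ hμX q hq Cq hCq hconc P hP
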